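/- Theorem 2(1): In an n-player mining game (m₁,…,mₙ) with m₁ ≥ m₂ ≥ ⋯ ≥ mₙ, the all-RHonest strategy profile (x₁ = ⋯ = xₙ = RHonest, i.e., Q = ∅) is a pure Nash equilibrium if and only if m₁ ≤ 1/3. -/

import Mathlib

/-- `f(y) := y²·(2−3y)/(1−2y)`. -/
noncomputable def f (y : ℝ) : ℝ := y^2 * (2 - 3*y) / (1 - 2*y)

/-- `g(y) := (−y³ + 2y² + y − 1)/(2y² + 4y − 3)`. -/
noncomputable def g (y : ℝ) : ℝ := (-y^3 + 2*y^2 + y - 1) / (2*y^2 + 4*y - 3)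

/-- `S(Q) := ∑_{j∈Q} m_j(1−m_j)`. -/
noncomputable def S {n : ℕ} (m : Fin n → ℝ) (Q : Finset (Fin n)) : ℝ :=
  ∑ j ∈ Q, m j * (1 - m j)

/-- Expected reward of pool `i` when the set of insightful pools is `Q`. -/
noncomputable def ER {n : ℕ} (m : Fin n → ℝ) (Q : Finset (Fin n)) (i : Fin n) : ℝ :=
  if i ∈ Q then f (m i) + 2 * m i * S m Q else m i + 2 * m i * S m Q

/-- Relative revenue (utility) of pool `i`. -/
noncomputable def RREV {n : ℕ} (m : Fin n → ℝ) (Q : Finset (Fin n)) (i : Fin n) : ℝ :=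
  ER m Q i / ∑ j, ER m Q j

/-- The profile obtained from `Q` when pool `i` unilaterally switches its strategy. -/
def switch {n : ℕ} (i : Fin n) (Q : Finset (Fin n)) : Finset (Fin n) :=
  if i ∈ Q then Q.erase i else insert i Q

/-- `Q` is a pure Nash equilibrium: no pool can strictly increase its relative
revenue by unilaterally switching its own strategy. -/
def IsNash {n : ℕ} (m : Fin n → ℝ) (Q : Finset (Fin n)) : Prop :=
  ∀ i : Fin n, RREV m (switch i Q) i ≤ RREV m Q i

lemma f_times (x : ℝ) (hx : x < 1/2) : f x * (1 - 2*x) = x^2 * (2 - 3*x) := by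
  unfold f
  have : (1 : ℝ) - 2*x ≠ 0 := by linarith
  rw [div_mul_cancel₀ _ this]

lemma f_nonneg (x : ℝ) (hx0 : 0 < x) (hx : x < 1/2) : 0 ≤ f x := by
  apply div_nonneg
  · nlinarith
  · linarith

/-- key inequality: the deviation payoff compared to `x`. -/
lemma key (x : ℝ) (hx0 : 0 < x) (hx : x < 1/2) :
    (f x + 2 * x * (x * (1 - x))) / (f x + (1 - x) + 2 * (x * (1 - x))) ≤ x ↔
      x ≤ 1/3 := by
  have h2 : (0:ℝ) < 1 - 2*x := by linarith
  have hf := f_times x hx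
  have hfn := f_nonneg x hx0 hx
  have hD : 0 < f x + (1 - x) + 2 * (x * (1 - x)) := by nlinarith
  rw [div_le_iff₀ hD]
  constructor
  · intro h
    nlinarith [sq_nonneg (x - 1/3), sq_nonneg x, mul_pos hx0 h2]
  · intro h
    nlinarith [mul_pos hx0 h2, sq_nonneg x]

lemma sum_ER_single {n : ℕ} (m : Fin n → ℝ) (hsum : ∑ i, m i = 1) (i : Fin n) :
    ∑ j, ER m {i} j = f (m i) + (1 - m i) + 2 * (m i * (1 - m i)) := by
  have hS : S m ({i} : Finset (Fin n)) = m i * (1 - m i) := by simp [S]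
  rw [← Finset.add_sum_erase _ _ (Finset.mem_univ i)]
  have h1 : ER m {i} i = f (m i) + 2 * m i * (m i * (1 - m i)) := by
    simp [ER, hS]
  have h2 : ∑ j ∈ Finset.univ.erase i, ER m {i} j
      = ∑ j ∈ Finset.univ.erase i, (m j + 2 * m j * (m i * (1 - m i))) := by
    apply Finset.sum_congr rfl
    intro j hj
    have : j ≠ i := (Finset.mem_erase.mp hj).1
    simp [ER, hS, this]
  have h3 : ∑ j ∈ Finset.univ.erase i, m j = 1 - m i := by
    rw [Finset.sum_erase_eq_sub (Finset.mem_univ i), hsum]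
  have h4 : ∑ j ∈ Finset.univ.erase i, 2 * m j = 2 * (1 - m i) := by
    rw [← Finset.mul_sum, h3]
  rw [h1, h2, Finset.sum_add_distrib, h3, ← Finset.sum_mul, h4]
  ring

/-- Theorem 2(1): all-RHonest (`Q = ∅`) is a pure Nash equilibrium iff `m₁ ≤ 1/3`. -/
theorem all_honest_nash_iff (n : ℕ) (hn : 2 ≤ n) (m : Fin n → ℝ)
    (hmono : ∀ i j : Fin n, i ≤ j → m j ≤ m i)
    (hpos : ∀ i, 0 < m i) (hhalf : ∀ i, m i < 1/2)
    (hsum : ∑ i, m i = 1) :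
    IsNash m (∅ : Finset (Fin n)) ↔ m ⟨0, by omega⟩ ≤ 1/3 := by
  have hRREV0 : ∀ i : Fin n, RREV m (∅ : Finset (Fin n)) i = m i := by
    intro i
    have : ∀ j : Fin n, ER m (∅ : Finset (Fin n)) j = m j := by
      intro j; simp [ER, S]
    simp only [RREV, this, hsum, div_one]
  have hswitch : ∀ i : Fin n, switch i (∅ : Finset (Fin n)) = {i} := by
    intro i; simp [switch]
  have hRREV1 : ∀ i : Fin n, RREV m ({i} : Finset (Fin n)) i
      = (f (m i) + 2 * m i * (m i * (1 - m i))) /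
        (f (m i) + (1 - m i) + 2 * (m i * (1 - m i))) := by
    intro i
    have hS : S m ({i} : Finset (Fin n)) = m i * (1 - m i) := by simp [S]
    rw [RREV, sum_ER_single m hsum i]
    simp [ER, hS]
  constructor
  · intro h
    have := h ⟨0, by omega⟩
    rw [hswitch, hRREV0, hRREV1] at this
    exact (key _ (hpos _) (hhalf _)).mp this
  · intro h i
    rw [hswitch, hRREV0, hRREV1]
    have hle : m i ≤ m ⟨0, by omega⟩ := hmono ⟨0, by omega⟩ i (by
      simp [Fin.le_def])
    exact (key _ (hpos _) (hhalf _)).mpr (le_trans hle h)
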